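/- For all integers m, n ≥ 3 and k ≥ 1, γ_{[k]R}(C_m □ C_n) ≥ (k+1)·mn/5. -/

import Mathlib

open SimpleGraph Finset
open scoped Classical

/-- Closed neighborhood of a vertex. -/
def closedNbr {V : Type*} (G : SimpleGraph V) (v : V) : Set V :=
  insert v (G.neighborSet v)

/-- `S` is an efficient dominating set: every vertex lies in the closed
neighborhood of exactly one vertex of `S`. -/
def IsEffDomSet {V : Type*} (G : SimpleGraph V) (S : Set V) : Prop :=
  ∀ v : V, ∃! u, u ∈ S ∧ v ∈ closedNbr G u

/-- `S` is a dominating set. -/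
def IsDomSet {V : Type*} (G : SimpleGraph V) (S : Set V) : Prop :=
  ∀ v : V, v ∉ S → ∃ u ∈ S, G.Adj u v

/-- The domination number. -/
noncomputable def domNumber {V : Type*} (G : SimpleGraph V) [Fintype V] : ℕ :=
  sInf {n | ∃ S : Set V, IsDomSet G S ∧ S.ncard = n}

/-- `f` is a `[k]`-Roman dominating function on `G`. -/
noncomputable def IsKRDF {V : Type*} (G : SimpleGraph V) [Fintype V] (k : ℕ) (f : V → ℕ) : Prop :=
  (∀ v, f v ≤ k + 1) ∧
  ∀ v : V, f v < k →
    f v + ∑ u ∈ univ.filter (fun u => G.Adj v u), f u ≥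
      k + (univ.filter (fun u => G.Adj v u ∧ 0 < f u)).card

/-- The `[k]`-Roman domination number. -/
noncomputable def kRoman {V : Type*} (G : SimpleGraph V) [Fintype V] (k : ℕ) : ℕ :=
  sInf {w | ∃ f : V → ℕ, IsKRDF G k f ∧ ∑ v, f v = w}

/-- `S` is a packing: closed neighborhoods of vertices in `S` are pairwise disjoint. -/
def IsPacking {V : Type*} (G : SimpleGraph V) (S : Set V) : Prop :=
  S.Pairwise fun u v => Disjoint (closedNbr G u) (closedNbr G v)

/-- The packing number. -/
noncomputable def packingNumber {V : Type*} (G : SimpleGraph V) [Fintype V] : ℕ :=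
  sSup {n | ∃ S : Set V, IsPacking G S ∧ S.ncard = n}

/-! Discharging. Give each vertex the charge `f(N[v])`; in an `r`-regular graph the charges
sum to `(r + 1) · w(f)`. For a `[k]`-Roman dominating function every charge is at least `k`,
and a vertex of charge exactly `k` (a tight vertex) has `f v = k` and only neighbours of weight
`0`. Let every tight vertex receive `1/r` from each neighbour. A non-tight vertex with `t ≥ 1`
tight neighbours has `f v = 0`, so the Roman condition gives it charge at least `k + t`, and
exactly `k · t` unless some positive neighbour is not tight; either way it keeps `k + 1` after
paying `t/r`. Hence every vertex ends with charge at least `k + 1`. -/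

namespace SimpleGraph

variable {V : Type*} {G : SimpleGraph V} {r : ℕ}

lemma IsRegularOfDegree.boxProd {W : Type*} {H : SimpleGraph W} {s : ℕ} [G.LocallyFinite]
    [H.LocallyFinite] [(G □ H).LocallyFinite] (hG : G.IsRegularOfDegree r)
    (hH : H.IsRegularOfDegree s) : (G □ H).IsRegularOfDegree (r + s) := fun x => by
  rw [degree_boxProd, hG.degree_eq, hH.degree_eq]

lemma isRegularOfDegree_cycleGraph {n : ℕ} (hn : 3 ≤ n) :
    (cycleGraph n).IsRegularOfDegree 2 := by
  obtain ⟨n, rfl⟩ : ∃ n', n = n' + 3 := ⟨n - 3, by omega⟩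
  exact fun _ => cycleGraph_degree_three_le

variable [Fintype V] [G.LocallyFinite]

lemma IsRegularOfDegree.card_filter_adj (hG : G.IsRegularOfDegree r) (v : V) :
    #{u | G.Adj v u} = r := by
  rw [← neighborFinset_eq_filter, card_neighborFinset_eq_degree]
  convert hG.degree_eq v

lemma IsRegularOfDegree.sum_sum_filter_adj (hG : G.IsRegularOfDegree r) (g : V → ℕ) :
    ∑ v, ∑ u with G.Adj v u, g u = r * ∑ u, g u := by
  simp_rw [sum_filter]
  rw [sum_comm, mul_sum]
  refine sum_congr rfl fun u _ => ?_
  simp_rw [G.adj_comm _ u]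
  rw [← sum_filter, sum_const, hG.card_filter_adj, smul_eq_mul]

lemma IsRegularOfDegree.sum_card_filter_adj_and (hG : G.IsRegularOfDegree r) (p : V → Prop) :
    ∑ v, #{u | G.Adj v u ∧ p u} = r * #{u | p u} := by
  simp_rw [← filter_filter, card_filter]
  rw [hG.sum_sum_filter_adj]

end SimpleGraph

section KRoman

variable {V : Type*} [Fintype V] {G : SimpleGraph V} {k r : ℕ} {f : V → ℕ}

noncomputable def closedNbrWeight (G : SimpleGraph V) (f : V → ℕ) (v : V) : ℕ :=
  f v + ∑ u with G.Adj v u, f u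

def IsTight (G : SimpleGraph V) (k : ℕ) (f : V → ℕ) (v : V) : Prop :=
  closedNbrWeight G f v ≤ k

lemma sum_filter_adj_eq_zero_iff_card_pos_eq_zero (G : SimpleGraph V) (f : V → ℕ) (v : V) :
    ∑ u with G.Adj v u, f u = 0 ↔ #{u | G.Adj v u ∧ 0 < f u} = 0 := by
  simp [sum_eq_zero_iff, filter_eq_empty_iff, Nat.pos_iff_ne_zero]

lemma isKRDF_const_succ : IsKRDF G k fun _ => k + 1 :=
  ⟨fun _ => le_rfl, fun _ h => absurd h (Nat.not_lt.2 k.le_succ)⟩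

namespace IsKRDF

lemma le_closedNbrWeight (hf : IsKRDF G k f) (v : V) : k ≤ closedNbrWeight G f v := by
  unfold closedNbrWeight
  by_cases h : f v < k
  · have := hf.2 v h
    omega
  · omega

lemma eq_of_isTight (hf : IsKRDF G k f) {v : V} (hv : IsTight G k f v) :
    f v = k ∧ ∀ u, G.Adj v u → f u = 0 := by
  unfold IsTight closedNbrWeight at hv
  have hfv : k ≤ f v := by
    by_contra! h
    have := hf.2 v h
    have := (sum_filter_adj_eq_zero_iff_card_pos_eq_zero G f v).2 (by omega)
    omega
  have hsum : ∑ u with G.Adj v u, f u = 0 := by omega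
  exact ⟨by omega, fun u hu => sum_eq_zero_iff.1 hsum u (by simpa using hu)⟩

lemma closedNbrWeight_eq_add_mul_card (hf : IsKRDF G k f) {v : V}
    (h : ∀ u, G.Adj v u → 0 < f u → IsTight G k f u) :
    closedNbrWeight G f v = f v + k * #{u | G.Adj v u ∧ IsTight G k f u} := by
  have htight : ∑ u with G.Adj v u ∧ IsTight G k f u, f u = ∑ u with G.Adj v u, f u := by
    rw [← filter_filter]
    exact sum_filter_of_ne fun u hu hfu => h u (mem_filter.1 hu).2 (Nat.pos_of_ne_zero hfu)
  rw [closedNbrWeight, ← htight,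
    sum_congr rfl fun u hu => (hf.eq_of_isTight (mem_filter.1 hu).2.2).1, sum_const, smul_eq_mul,
    mul_comm]

lemma not_isTight_of_adj (hk : 1 ≤ k) (hf : IsKRDF G k f) {u v : V} (hv : IsTight G k f v)
    (hvu : G.Adj v u) : ¬IsTight G k f u := fun hu => by
  have := (hf.eq_of_isTight hv).2 u hvu
  have := (hf.eq_of_isTight hu).1
  omega

lemma mul_succ_add_card_adj_isTight_le_of_adj (hk : 1 ≤ k) (hf : IsKRDF G k f) {b v : V}
    (hvb : G.Adj v b) (hb : IsTight G k f b) (htr : #{u | G.Adj v u ∧ IsTight G k f u} ≤ r) :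
    r * (k + 1) + #{u | G.Adj v u ∧ IsTight G k f u} ≤ r * closedNbrWeight G f v := by
  have hfv : f v = 0 := (hf.eq_of_isTight hb).2 v hvb.symm
  have hroman : k + #{u | G.Adj v u ∧ 0 < f u} ≤ closedNbrWeight G f v := hf.2 v (by omega)
  have hsub : ({u | G.Adj v u ∧ IsTight G k f u} : Finset V) ⊆
      ({u | G.Adj v u ∧ 0 < f u} : Finset V) :=
    monotone_filter_right _ fun u _ h => ⟨h.1, by have := (hf.eq_of_isTight h.2).1; omega⟩
  set t := #{u | G.Adj v u ∧ IsTight G k f u} with ht_def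
  have ht : 1 ≤ t := card_pos.2 ⟨b, mem_filter.2 ⟨mem_univ b, hvb, hb⟩⟩
  obtain hpos | hlt := hsub.eq_or_ssubset
  · have hw := hf.closedNbrWeight_eq_add_mul_card (v := v) fun u hvu hu => by
      simpa [hvu] using hpos.ge (mem_filter.2 ⟨mem_univ u, hvu, hu⟩)
    rw [← hpos, hw, hfv, zero_add] at hroman
    rw [← ht_def] at hroman hw
    -- `k * t ≥ k + t` forces `t ≥ 2`, hence `r ≥ 2`
    have ht2 : 2 ≤ t := by
      by_contra!
      have : t = 1 := by omega
      rw [this, mul_one] at hroman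
      omega
    rw [hw, hfv, zero_add]
    nlinarith [Nat.mul_le_mul_left r hroman]
  · have := card_lt_card hlt
    nlinarith [Nat.mul_le_mul_left r hroman]

variable [G.LocallyFinite]

lemma mul_succ_add_card_adj_isTight_le (hG : G.IsRegularOfDegree r) (hk : 1 ≤ k)
    (hf : IsKRDF G k f) (v : V) :
    r * (k + 1) + #{u | G.Adj v u ∧ IsTight G k f u} ≤
      r * (closedNbrWeight G f v + if IsTight G k f v then 1 else 0) := by
  have htr : #{u | G.Adj v u ∧ IsTight G k f u} ≤ r :=
    hG.card_filter_adj v ▸ card_le_card (monotone_filter_right _ fun _ _ h => h.1)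
  by_cases hv : IsTight G k f v
  · have hnone : #{u | G.Adj v u ∧ IsTight G k f u} = 0 :=
      card_eq_zero.2 (filter_eq_empty_iff.2 fun _ _ h => hf.not_isTight_of_adj hk hv h.1 h.2)
    rw [if_pos hv, hnone, add_zero]
    exact Nat.mul_le_mul_left r (by have := hf.le_closedNbrWeight v; omega)
  rw [if_neg hv, add_zero]
  obtain hnone | ⟨b, hb⟩ :=
    ({u | G.Adj v u ∧ IsTight G k f u} : Finset V).eq_empty_or_nonempty
  · rw [hnone, card_empty, add_zero]
    exact Nat.mul_le_mul_left r (by unfold IsTight at hv; omega)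
  · rw [mem_filter] at hb
    exact hf.mul_succ_add_card_adj_isTight_le_of_adj hk hb.2.1 hb.2.2 htr

theorem succ_mul_card_le (hG : G.IsRegularOfDegree r) (hr : 0 < r) (hk : 1 ≤ k)
    (hf : IsKRDF G k f) : (k + 1) * Fintype.card V ≤ (r + 1) * ∑ v, f v := by
  have hsum := sum_le_sum fun v (_ : v ∈ univ) => hf.mul_succ_add_card_adj_isTight_le hG hk v
  have hweight : ∑ v, closedNbrWeight G f v = (r + 1) * ∑ v, f v := by
    simp only [closedNbrWeight, sum_add_distrib, hG.sum_sum_filter_adj]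
    ring
  simp only [← mul_sum, sum_add_distrib, sum_const, card_univ, smul_eq_mul, hweight,
    hG.sum_card_filter_adj_and, sum_boole] at hsum
  refine Nat.le_of_mul_le_mul_left ?_ hr
  nlinarith

end IsKRDF

lemma exists_isKRDF_sum_eq_kRoman (G : SimpleGraph V) (k : ℕ) :
    ∃ f, IsKRDF G k f ∧ ∑ v, f v = kRoman G k :=
  Nat.sInf_mem (s := {w | ∃ f, IsKRDF G k f ∧ ∑ v, f v = w})
    ⟨_, _, isKRDF_const_succ, rfl⟩

theorem succ_mul_card_le_kRoman [G.LocallyFinite] (hG : G.IsRegularOfDegree r) (hr : 0 < r)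
    (hk : 1 ≤ k) : (k + 1) * Fintype.card V ≤ (r + 1) * kRoman G k := by
  obtain ⟨f, hf, hw⟩ := exists_isKRDF_sum_eq_kRoman G k
  exact hw ▸ hf.succ_mul_card_le hG hr hk

end KRoman

theorem stmt8 (m n k : ℕ) (hm : 3 ≤ m) (hn : 3 ≤ n) (hk : 1 ≤ k) :
    (kRoman ((cycleGraph m).boxProd (cycleGraph n)) k : ℚ) ≥ (k + 1) * m * n / 5 := by
  have hreg : ((cycleGraph m).boxProd (cycleGraph n)).IsRegularOfDegree (2 + 2) :=
    (isRegularOfDegree_cycleGraph hm).boxProd (isRegularOfDegree_cycleGraph hn)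
  have hbound := succ_mul_card_le_kRoman hreg (by norm_num) hk
  rw [Fintype.card_prod, Fintype.card_fin, Fintype.card_fin] at hbound
  rw [ge_iff_le, div_le_iff₀ (by norm_num)]
  exact_mod_cast (by linarith : (k + 1) * m * n ≤ kRoman _ k * 5)
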